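/- Let 0 ≤ v_0 ≤ v_1 with v_1 > 0, and let Q assign to each of the 6 types t of NC_00(C_5) a probability distribution Q(t) on answer profiles supported on profiles winning on t and with each player's answer marginal under Q(t) uniform on {0,1}. With the type drawn uniformly among the 6 types, following the advice is a Nash equilibrium — for every player i, no deviation rule d_i : {0,1} × {0,1} → {0,1} applied to (own type bit, own advice bit), with all other players answering their advice, gives player i a strictly larger expected payoff — if and only if 2 v_0 ≥ v_1. -/
import Mathlib


open Finset

/-- The 6 questions/types of the game on the 5-cycle: `none` is `Tₐ = 11111`;
`some i` is the question `Tᵢ` giving input bit 1 to player `i` and 0 to the others. -/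
abbrev C5Type := Option (ZMod 5)

/-- Input (type) bit of player `j` in question `t` of `MCG(C₅)`/`NC₀₀(C₅)`. -/
def inputBit : C5Type → ZMod 5 → ZMod 2
  | none, _ => 1
  | some i, j => if j = i then 1 else 0

/-- The involved set of question `t`: all five players for `Tₐ`;
`{i-1, i, i+1}` for `Tᵢ`. -/
def involvedSet : C5Type → Finset (ZMod 5)
  | none => Finset.univ
  | some i => {i - 1, i, i + 1}

/-- The target parity bit of question `t`: `1` for `Tₐ` and `0` for each `Tᵢ`. -/
def targetBit : C5Type → ZMod 2
  | none => 1
  | some _ => 0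

/-- Payoff of player `j` on (answer profile `s`, type `t`) in `NC₀₀(C₅)`:
`v_{s j}` if `s` wins on `t`, else `0`. -/
noncomputable def payoffOf (v0 v1 : ℝ) (j : ZMod 5) (s : ZMod 5 → ZMod 2)
    (t : C5Type) : ℝ :=
  if ∑ k ∈ involvedSet t, s k = targetBit t then (if s j = 1 then v1 else v0) else 0

/-- Expected payoff of player `i` when the type is uniform over the 6 types and
all players answer according to the advice correlation `Q`. -/
noncomputable def adviceUtil (v0 v1 : ℝ) (Q : C5Type → (ZMod 5 → ZMod 2) → ℝ)
    (i : ZMod 5) : ℝ :=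
  (∑ t : C5Type, ∑ s : ZMod 5 → ZMod 2, Q t s * payoffOf v0 v1 i s t) / 6

/-- Expected payoff of player `i` when everybody else follows the advice but
player `i` applies the deviation rule `d` to (own type bit, own advice bit). -/
noncomputable def deviationUtil (v0 v1 : ℝ) (Q : C5Type → (ZMod 5 → ZMod 2) → ℝ)
    (i : ZMod 5) (d : ZMod 2 → ZMod 2 → ZMod 2) : ℝ :=
  (∑ t : C5Type, ∑ s : ZMod 5 → ZMod 2, Q t s *
    payoffOf v0 v1 i (Function.update s i (d (inputBit t i) (s i))) t) / 6

-- fiberwise half lemma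
lemma sum_comp_half (q : (ZMod 5 → ZMod 2) → ℝ) (i : ZMod 5)
    (hmarg : ∀ σ : ZMod 2, ∑ s ∈ Finset.univ.filter (fun s : ZMod 5 → ZMod 2 => s i = σ), q s = 1/2)
    (f : ZMod 2 → ℝ) :
    ∑ s : ZMod 5 → ZMod 2, q s * f (s i) = (f 0 + f 1) / 2 := by
  have h : ∑ σ : ZMod 2, ∑ s ∈ Finset.univ.filter (fun s : ZMod 5 → ZMod 2 => s i = σ),
      (q s * f (s i)) = ∑ s : ZMod 5 → ZMod 2, q s * f (s i) :=
    Finset.sum_fiberwise_of_maps_to (fun s _ => mem_univ _) _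
  rw [← h]
  have h2 : ∀ σ : ZMod 2, ∑ s ∈ Finset.univ.filter (fun s : ZMod 5 → ZMod 2 => s i = σ),
      (q s * f (s i)) = f σ * (1/2) := by
    intro σ
    rw [← hmarg σ, Finset.mul_sum]
    refine Finset.sum_congr rfl fun s hs => ?_
    have hsi : s i = σ := (Finset.mem_filter.mp hs).2
    rw [hsi, mul_comm]
  rw [show (univ : Finset (ZMod 2)) = {0, 1} from by decide,
    Finset.sum_insert (by decide), Finset.sum_singleton, h2 0, h2 1]
  ring

lemma payoff_update (v0 v1 : ℝ) (i : ZMod 5) (s : ZMod 5 → ZMod 2) (t : C5Type) (a' : ZMod 2)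
    (hwin : ∑ k ∈ involvedSet t, s k = targetBit t) :
    payoffOf v0 v1 i (Function.update s i a') t
      = if i ∉ involvedSet t ∨ a' = s i then (if a' = 1 then v1 else v0) else 0 := by
  unfold payoffOf
  by_cases hi : i ∈ involvedSet t
  · rw [Finset.sum_update_of_mem hi, Function.update_self]
    rw [Finset.sum_eq_sum_sdiff_singleton_add hi] at hwin
    have hcond : (a' + ∑ x ∈ involvedSet t \ {i}, s x = targetBit t) ↔ (a' = s i) := by
      rw [← hwin, add_comm (∑ x ∈ involvedSet t \ {i}, s x) (s i)]
      exact add_left_inj _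
    simp only [hcond, hi, not_true_eq_false, false_or]
  · have hsum : ∑ k ∈ involvedSet t, Function.update s i a' k = ∑ k ∈ involvedSet t, s k :=
      Finset.sum_congr rfl fun k hk => Function.update_of_ne (fun h => hi (by rw [← h]; exact hk)) _ _
    rw [hsum, Function.update_self, if_pos hwin, if_pos (Or.inl hi)]

lemma dev_type_sum (v0 v1 : ℝ) (t : C5Type) (q : (ZMod 5 → ZMod 2) → ℝ) (i : ZMod 5)
    (hwin : ∀ s, q s ≠ 0 → ∑ j ∈ involvedSet t, s j = targetBit t)
    (hmarg : ∀ σ : ZMod 2, ∑ s ∈ Finset.univ.filter (fun s : ZMod 5 → ZMod 2 => s i = σ), q s = 1/2)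
    (g : ZMod 2 → ZMod 2) :
    ∑ s : ZMod 5 → ZMod 2, q s * payoffOf v0 v1 i (Function.update s i (g (s i))) t
      = ((if i ∉ involvedSet t ∨ g 0 = 0 then (if g 0 = 1 then v1 else v0) else 0)
        + (if i ∉ involvedSet t ∨ g 1 = 1 then (if g 1 = 1 then v1 else v0) else 0)) / 2 := by
  have key : ∀ s : ZMod 5 → ZMod 2, q s * payoffOf v0 v1 i (Function.update s i (g (s i))) t
      = q s * (fun a => if i ∉ involvedSet t ∨ g a = a then (if g a = 1 then v1 else v0) else 0) (s i) := by
    intro s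
    rcases eq_or_ne (q s) 0 with h | h
    · rw [h, zero_mul, zero_mul]
    · rw [payoff_update v0 v1 i s t (g (s i)) (hwin s h)]
  rw [Finset.sum_congr rfl fun s _ => key s]
  exact sum_comp_half q i hmarg (fun a => if i ∉ involvedSet t ∨ g a = a then (if g a = 1 then v1 else v0) else 0)

lemma adv_type_sum (v0 v1 : ℝ) (t : C5Type) (q : (ZMod 5 → ZMod 2) → ℝ) (i : ZMod 5)
    (hwin : ∀ s, q s ≠ 0 → ∑ j ∈ involvedSet t, s j = targetBit t)
    (hmarg : ∀ σ : ZMod 2, ∑ s ∈ Finset.univ.filter (fun s : ZMod 5 → ZMod 2 => s i = σ), q s = 1/2) :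
    ∑ s : ZMod 5 → ZMod 2, q s * payoffOf v0 v1 i s t = (v0 + v1) / 2 := by
  have key : ∀ s : ZMod 5 → ZMod 2, q s * payoffOf v0 v1 i s t
      = q s * (fun a : ZMod 2 => if a = 1 then v1 else v0) (s i) := by
    intro s
    rcases eq_or_ne (q s) 0 with h | h
    · rw [h, zero_mul, zero_mul]
    · show q s * payoffOf v0 v1 i s t = q s * (if s i = 1 then v1 else v0)
      unfold payoffOf
      rw [if_pos (hwin s h)]
  rw [Finset.sum_congr rfl fun s _ => key s, sum_comp_half q i hmarg (fun a : ZMod 2 => if a = 1 then v1 else v0)]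
  rw [if_neg (by decide), if_pos rfl]

lemma memIS0 (i : ZMod 5) : i ∈ involvedSet (some (i + 0)) := by
  simp [involvedSet]

lemma memIS1 (i : ZMod 5) : i ∈ involvedSet (some (i + 1)) := by
  simp [involvedSet]

lemma memIS4 (i : ZMod 5) : i ∈ involvedSet (some (i + 4)) := by
  have h5 : i + 4 + 1 = i := by
    rw [add_assoc, show (4 : ZMod 5) + 1 = 0 from by decide, add_zero]
  simp [involvedSet, h5]

lemma memIS2 (i : ZMod 5) : i ∉ involvedSet (some (i + 2)) := by
  simp only [involvedSet, Finset.mem_insert, Finset.mem_singleton,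
    show i + 2 - 1 = i + 1 from by ring, show i + 2 + 1 = i + 3 from by ring,
    left_eq_add]
  decide
  
lemma memIS3 (i : ZMod 5) : i ∉ involvedSet (some (i + 3)) := by
  simp only [involvedSet, Finset.mem_insert, Finset.mem_singleton,
    show i + 3 - 1 = i + 2 from by ring, show i + 3 + 1 = i + 4 from by ring,
    left_eq_add]
  decide

lemma inputBit_add (i k : ZMod 5) : inputBit (some (i + k)) i = if k = 0 then 1 else 0 := by
  by_cases hk : k = 0
  · simp [inputBit, hk]
  · simp [inputBit, left_eq_add, hk]

lemma ib0 (i : ZMod 5) : inputBit (some (i + 0)) i = 1 := by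
  rw [inputBit_add]; simp

lemma ibk (i k : ZMod 5) (hk : k ≠ 0) : inputBit (some (i + k)) i = 0 := by
  rw [inputBit_add, if_neg hk]

lemma sum_C5 (f : C5Type → ℝ) (i : ZMod 5) :
    ∑ t : C5Type, f t = f none + (f (some (i + 0)) + (f (some (i + 1)) +
      (f (some (i + 2)) + (f (some (i + 3)) + f (some (i + 4)))))) := by
  rw [Fintype.sum_option]
  congr 1
  rw [← Fintype.sum_equiv (Equiv.addLeft i) (fun k => f (some (i + k))) (fun j => f (some j))
      (fun k => rfl)]
  rw [show (univ : Finset (ZMod 5)) = {0, 1, 2, 3, 4} from by decide,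
    Finset.sum_insert (by decide), Finset.sum_insert (by decide),
    Finset.sum_insert (by decide), Finset.sum_insert (by decide), Finset.sum_singleton]

/-- **Quantum advice is a Nash equilibrium in `NC₀₀(C₅)` iff `2 v0 ≥ v1`.**
Let `0 ≤ v0 ≤ v1`, `v1 > 0`, and let `Q` assign to each of the 6 types of
`NC₀₀(C₅)` a probability distribution on answer profiles supported on winning
profiles and with uniform per-player answer marginals.  With the type uniform
over the 6 types, following the advice is a Nash equilibrium iff `2 v0 ≥ v1`. -/
theorem advice_nash_NC00_iff (v0 v1 : ℝ) (hv0 : 0 ≤ v0) (hv01 : v0 ≤ v1) (hv1 : 0 < v1)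
    (Q : C5Type → (ZMod 5 → ZMod 2) → ℝ)
    (hQnonneg : ∀ (t : C5Type) (s : ZMod 5 → ZMod 2), 0 ≤ Q t s)
    (hQsum : ∀ t : C5Type, ∑ s : ZMod 5 → ZMod 2, Q t s = 1)
    (hQwin : ∀ (t : C5Type) (s : ZMod 5 → ZMod 2), Q t s ≠ 0 →
      ∑ j ∈ involvedSet t, s j = targetBit t)
    (hQmarg : ∀ (t : C5Type) (j : ZMod 5) (σ : ZMod 2),
      ∑ s ∈ Finset.univ.filter (fun s : ZMod 5 → ZMod 2 => s j = σ), Q t s = 1 / 2) :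
    (∀ (i : ZMod 5) (d : ZMod 2 → ZMod 2 → ZMod 2),
        deviationUtil v0 v1 Q i d ≤ adviceUtil v0 v1 Q i)
    ↔ 2 * v0 ≥ v1 := by
  have hadv : ∀ i : ZMod 5, adviceUtil v0 v1 Q i = (v0 + v1) / 2 := by
    intro i
    unfold adviceUtil
    rw [Finset.sum_congr rfl (fun t _ => adv_type_sum v0 v1 t (Q t) i (hQwin t) (hQmarg t i))]
    rw [Finset.sum_const, Finset.card_univ]
    simp [Fintype.card_option]
  have hdev : ∀ (i : ZMod 5) (d : ZMod 2 → ZMod 2 → ZMod 2),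
      deviationUtil v0 v1 Q i d =
      ( (if d 1 0 = 0 then (if d 1 0 = 1 then v1 else v0) else 0)
      + (if d 1 1 = 1 then (if d 1 1 = 1 then v1 else v0) else 0)
      + (if d 0 0 = 0 then (if d 0 0 = 1 then v1 else v0) else 0)
      + (if d 0 1 = 1 then (if d 0 1 = 1 then v1 else v0) else 0)
      + (if d 0 0 = 1 then v1 else v0) + (if d 0 1 = 1 then v1 else v0) ) / 6 := by
    intro i d
    unfold deviationUtil
    rw [Finset.sum_congr rfl (fun t _ =>
      dev_type_sum v0 v1 t (Q t) i (hQwin t) (hQmarg t i) (d (inputBit t i)))]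
    rw [sum_C5 (fun t =>
      ((if i ∉ involvedSet t ∨ d (inputBit t i) 0 = 0 then (if d (inputBit t i) 0 = 1 then v1 else v0) else 0)
        + (if i ∉ involvedSet t ∨ d (inputBit t i) 1 = 1 then (if d (inputBit t i) 1 = 1 then v1 else v0) else 0)) / 2) i]
    have ibNone : inputBit none i = 1 := rfl
    have memNone : i ∈ involvedSet none := Finset.mem_univ i
    simp only [ibNone, memNone, ib0 i, ibk i 1 (by decide), ibk i 2 (by decide),
      ibk i 3 (by decide), ibk i 4 (by decide), memIS0 i, memIS1 i, memIS2 i, memIS3 i,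
      memIS4 i, not_true_eq_false, not_false_eq_true, false_or, true_or, if_true]
    ring
  constructor
  · intro hN
    have h0 := hN 0 (fun b a => if b = 0 ∧ a = 0 then 1 else a)
    rw [hdev, hadv] at h0
    simp only [show ((1:ZMod 2) = 0) = False from by decide, show ((0:ZMod 2) = 0) = True from by decide,
      show ((1:ZMod 2) = 1) = True from by decide, show ((0:ZMod 2) = 1) = False from by decide,
      true_and, false_and, if_true, if_false] at h0
    linarith
  · intro hineq i d
    rw [hdev, hadv]
    have h2 : ∀ x : ZMod 2, x = 0 ∨ x = 1 := by decide
    rcases h2 (d 1 0) with h | h <;> rcases h2 (d 1 1) with h' | h' <;>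
      rcases h2 (d 0 0) with h3 | h3 <;> rcases h2 (d 0 1) with h4 | h4 <;>
      rw [h, h', h3, h4] <;>
      simp only [show ((1:ZMod 2) = 0) = False from by decide, show ((0:ZMod 2) = 0) = True from by decide,
        show ((1:ZMod 2) = 1) = True from by decide, show ((0:ZMod 2) = 1) = False from by decide,
        if_true, if_false] <;>
      linarith
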